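/- If k, m, n are positive integers with n > m and P_k = F_m · F_n, then |(5/(2√2)) · γ^k · α^{−(m+n)} − 1| < 6/α^{2m}. -/

import Mathlib

/-- The Pell sequence: P 0 = 0, P 1 = 1, P (n+2) = 2 * P (n+1) + P n. -/
def pell : ℕ → ℕ
  | 0 => 0
  | 1 => 1
  | n + 2 => 2 * pell (n + 1) + pell n

/-!
Write `φ = α`, `ψ = -1/φ` and `δ = 1 - √2`. The Binet formulas turn `P_k = F_m F_n` into
`5 γ^k / (2√2) = 5 δ^k / (2√2) + (φ^m - ψ^m) (φ^n - ψ^n)`; dividing by `φ^(m+n)` and putting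
`r = ψ / φ`, the linear form minus one equals `5 δ^k / (2√2 φ^(m+n)) - r^m - r^n + r^(m+n)`.
Since `|r| = φ⁻²`, `|δ| < 1` and `m ≤ n`, each of the four terms is at most `|r|^m = φ^(-2m)`,
and `5 / (2√2) + 3 < 6`.
-/

open Real goldenRatio

lemma pow_add_two_of_sq_eq {R : Type*} [CommRing R] {x : R} (hx : x ^ 2 = 2 * x + 1) (n : ℕ) :
    x ^ (n + 2) = 2 * x ^ (n + 1) + x ^ n := by
  linear_combination x ^ n * hx

lemma pell_mul_two_sqrt_two (k : ℕ) :
    (pell k : ℝ) * (2 * √2) = (1 + √2) ^ k - (1 - √2) ^ k := by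
  have h2 : √2 ^ 2 = 2 := sq_sqrt (by norm_num)
  induction k using Nat.twoStepInduction with
  | zero => simp [pell]
  | one => simp [pell]; ring
  | more n ih₁ ih₂ =>
    rw [pow_add_two_of_sq_eq (by linear_combination h2), pow_add_two_of_sq_eq
      (by linear_combination h2), pell]
    push_cast
    linear_combination 2 * ih₂ + ih₁

lemma five_div_two_sqrt_two_mul_pell (k : ℕ) :
    5 / (2 * √2) * ((1 + √2) ^ k - (1 - √2) ^ k) = 5 * pell k := by
  rw [← pell_mul_two_sqrt_two]
  field_simp

lemma five_mul_fib_mul_fib (m n : ℕ) :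
    5 * (Nat.fib m * Nat.fib n : ℝ) = (φ ^ m - ψ ^ m) * (φ ^ n - ψ ^ n) := by
  have h5 : √5 ^ 2 = 5 := sq_sqrt (by norm_num)
  rw [coe_fib_eq, coe_fib_eq]
  field_simp
  rw [h5]
  ring

lemma mul_mul_inv_sub_one_eq {c x y a b a' b' : ℝ} (ha : a ≠ 0) (ha' : a' ≠ 0)
    (h : c * (x - y) = (a - b) * (a' - b')) :
    c * x * (a * a')⁻¹ - 1 = c * (y / (a * a')) - b / a - b' / a' + b / a * (b' / a') := by
  field_simp
  linear_combination h

lemma abs_mul_sub_pow_sub_pow_add_lt {c e r : ℝ} {m n : ℕ} (hc₀ : 0 ≤ c) (hc : c < 3)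
    (he : |e| ≤ |r| ^ m) (hr₀ : r ≠ 0) (hr : |r| ≤ 1) (hmn : m ≤ n) :
    |c * e - r ^ m - r ^ n + r ^ m * r ^ n| < 6 * |r| ^ m := by
  have hpos : 0 < |r| ^ m := pow_pos (abs_pos.2 hr₀) m
  have hn : |r| ^ n ≤ |r| ^ m := pow_le_pow_of_le_one (abs_nonneg r) hr hmn
  have hprod : |r| ^ m * |r| ^ n ≤ |r| ^ m :=
    mul_le_of_le_one_right hpos.le (pow_le_one₀ (abs_nonneg r) hr)
  calc |c * e - r ^ m - r ^ n + r ^ m * r ^ n|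
      ≤ c * |e| + |r| ^ m + |r| ^ n + |r| ^ m * |r| ^ n := by
        have := abs_add_le (c * e - r ^ m - r ^ n) (r ^ m * r ^ n)
        have := abs_sub (c * e - r ^ m) (r ^ n)
        have := abs_sub (c * e) (r ^ m)
        simp only [abs_mul, abs_pow, abs_of_nonneg hc₀] at *
        linarith
    _ < 6 * |r| ^ m := by nlinarith

lemma five_div_two_sqrt_two_lt_three : 5 / (2 * √2) < 3 := by
  have h2 : √2 ^ 2 = 2 := sq_sqrt (by norm_num)
  rw [div_lt_iff₀ (by positivity)]
  nlinarith [sqrt_nonneg 2]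

lemma abs_one_sub_sqrt_two_le_one : |1 - √2| ≤ 1 := by
  have : √2 ≤ 2 := by rw [sqrt_le_left] <;> norm_num
  rw [abs_le]
  constructor <;> linarith [sqrt_nonneg 2]

lemma abs_goldenConj_div_goldenRatio : |ψ / φ| = (φ ^ 2)⁻¹ := by
  rw [div_eq_mul_inv, ← inv_pow, inv_goldenRatio, mul_neg, abs_neg, neg_sq, ← sq, abs_sq]

lemma abs_goldenConj_div_goldenRatio_pow (m : ℕ) : |ψ / φ| ^ m = (φ ^ (2 * m))⁻¹ := by
  rw [abs_goldenConj_div_goldenRatio, inv_pow, pow_mul]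

lemma abs_goldenConj_div_goldenRatio_le_one : |ψ / φ| ≤ 1 := by
  rw [abs_goldenConj_div_goldenRatio]
  exact inv_le_one_of_one_le₀ (one_le_pow₀ one_lt_goldenRatio.le)

lemma abs_one_sub_sqrt_two_pow_div_le {m n : ℕ} (hmn : m ≤ n) (k : ℕ) :
    |(1 - √2) ^ k / (φ ^ m * φ ^ n)| ≤ |ψ / φ| ^ m := by
  have hφ := goldenRatio_pos
  rw [abs_goldenConj_div_goldenRatio_pow, abs_div, abs_pow,
    abs_of_pos (by positivity : 0 < φ ^ m * φ ^ n), ← pow_add]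
  calc |1 - √2| ^ k / φ ^ (m + n) ≤ 1 / φ ^ (m + n) := by
        gcongr
        exact pow_le_one₀ (abs_nonneg _) abs_one_sub_sqrt_two_le_one
    _ ≤ (φ ^ (2 * m))⁻¹ := by
        rw [one_div]
        gcongr
        · exact one_lt_goldenRatio.le
        · omega

theorem linear_form_PFF_1_general (k m n : ℕ) (hmn : n > m)
    (h : pell k = Nat.fib m * Nat.fib n) :
    |(5 / (2 * Real.sqrt 2)) * (1 + Real.sqrt 2) ^ k *
        ((1 + Real.sqrt 5) / 2) ^ (-((m : ℤ) + n)) - 1|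
      < 6 / ((1 + Real.sqrt 5) / 2) ^ (2 * m) := by
  change |5 / (2 * √2) * (1 + √2) ^ k * φ ^ (-((m : ℤ) + n)) - 1| < 6 / φ ^ (2 * m)
  have hP : 5 / (2 * √2) * ((1 + √2) ^ k - (1 - √2) ^ k)
      = (φ ^ m - ψ ^ m) * (φ ^ n - ψ ^ n) := by
    rw [five_div_two_sqrt_two_mul_pell, ← five_mul_fib_mul_fib]
    exact_mod_cast congrArg (5 * ·) h
  have hφ₀ : ∀ j : ℕ, φ ^ j ≠ 0 := fun j ↦ pow_ne_zero j goldenRatio_ne_zero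
  rw [zpow_neg, zpow_add₀ goldenRatio_ne_zero, zpow_natCast, zpow_natCast,
    mul_mul_inv_sub_one_eq (hφ₀ m) (hφ₀ n) hP, ← div_pow, ← div_pow, div_eq_mul_inv 6,
    ← abs_goldenConj_div_goldenRatio_pow]
  exact abs_mul_sub_pow_sub_pow_add_lt (by positivity) five_div_two_sqrt_two_lt_three
    (abs_one_sub_sqrt_two_pow_div_le hmn.le k) (div_ne_zero goldenConj_ne_zero goldenRatio_ne_zero)
    abs_goldenConj_div_goldenRatio_le_one hmn.le

/-- If k, m, n are positive integers with n > m and P_k = F_m · F_n, then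
|(5/(2√2))·γ^k·α^{−(m+n)} − 1| < 6/α^{2m}, where α = (1+√5)/2 and γ = 1+√2. -/
theorem linear_form_PFF_1 (k m n : ℕ) (hk : 0 < k) (hm : 0 < m) (hmn : n > m)
    (h : pell k = Nat.fib m * Nat.fib n) :
    |(5 / (2 * Real.sqrt 2)) * (1 + Real.sqrt 2) ^ k *
        ((1 + Real.sqrt 5) / 2) ^ (-((m : ℤ) + n)) - 1|
      < 6 / ((1 + Real.sqrt 5) / 2) ^ (2 * m) :=
  linear_form_PFF_1_general k m n hmn h
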